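/- arXiv:2101.01081 — 5 statements merged into one kernel-verified Lean document; each statement's English description precedes it below -/
import Mathlib

section
/- Let G be a simple connected graph with distinguished vertices m₁, m₂ (non-adjacent). If for every pair of vertices u, v of G, either G − {u, v} is connected or every connected component of G − {u, v} contains m₁ or m₂, then G + m₁m₂ is 3-vertex-connected (assuming G has at least 5 vertices). -/
/-
Deleting one or two vertices from `G` leaves, by hypothesis, either a connected graph or one
in which every component meets `{m₁, m₂}`. In the second case the new edge `m₁m₂` (or the
single surviving `mᵢ`) joins all those components, so `G + m₁m₂` stays connected.
-/

/-- `G` with the extra edge `a b` added. -/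
def addEdge {V : Type*} (G : SimpleGraph V) (a b : V) : SimpleGraph V :=
  G ⊔ SimpleGraph.fromEdgeSet {s(a, b)}

/-- `G` is `k`-vertex-connected: more than `k` vertices and deleting any fewer
than `k` vertices leaves the graph connected. -/
def KConn {V : Type*} [Fintype V] [DecidableEq V] (G : SimpleGraph V) (k : ℕ) : Prop :=
  k < Fintype.card V ∧
    ∀ S : Finset V, S.card < k → (G.induce ((↑S : Set V)ᶜ)).Connected

theorem SimpleGraph.connected_of_forall_reachable_mem {W : Type*} [Nonempty W]
    {H : SimpleGraph W} (s : Set W) (hs : ∀ a ∈ s, ∀ b ∈ s, H.Reachable a b)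
    (h : ∀ x, ∃ m ∈ s, H.Reachable x m) : H.Connected where
  preconnected x y := by
    obtain ⟨mx, hmx, hx⟩ := h x
    obtain ⟨my, hmy, hy⟩ := h y
    exact (hx.trans (hs mx hmx my hmy)).trans hy.symm

section addEdge

variable {V : Type*} (G : SimpleGraph V) (a b : V)

theorem le_addEdge : G ≤ addEdge G a b := le_sup_left

theorem addEdge_adj_of_ne (hab : a ≠ b) : (addEdge G a b).Adj a b :=
  Or.inr (by simp [SimpleGraph.fromEdgeSet_adj, hab])

theorem induce_addEdge_connected (hab : a ≠ b) (T : Set V) [Nonempty T]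
    (hT : (G.induce T).Connected ∨
      ∀ x : T, ∃ m, (m = a ∨ m = b) ∧ ∃ hm : m ∈ T, (G.induce T).Reachable x ⟨m, hm⟩) :
    ((addEdge G a b).induce T).Connected := by
  have hle : G.induce T ≤ (addEdge G a b).induce T := fun _ _ h ↦ le_addEdge G a b h
  rcases hT with hconn | hreach
  · exact hconn.mono hle
  refine SimpleGraph.connected_of_forall_reachable_mem {m : T | m.1 = a ∨ m.1 = b} ?_ ?_
  · have hadj : ∀ x y : T, x.1 = a → y.1 = b → ((addEdge G a b).induce T).Reachable x y :=
      fun x y hx hy ↦ SimpleGraph.Adj.reachable (G := (addEdge G a b).induce T)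
        (by simpa [hx, hy] using addEdge_adj_of_ne G a b hab)
    rintro x (hx | hx) y (hy | hy)
    · exact Subtype.ext (hx.trans hy.symm) ▸ .rfl
    · exact hadj x y hx hy
    · exact (hadj y x hy hx).symm
    · exact Subtype.ext (hx.trans hy.symm) ▸ .rfl
  · intro x
    obtain ⟨m, hm, hmT, hx⟩ := hreach x
    exact ⟨⟨m, hmT⟩, hm, hx.mono hle⟩

end addEdge

theorem Finset.exists_coe_eq_pair {V : Type*} [DecidableEq V] {S : Finset V}
    (hne : S.Nonempty) (hS : S.card ≤ 2) : ∃ u v : V, (S : Set V) = {u, v} := by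
  obtain h1 | h2 : S.card = 1 ∨ S.card = 2 := by have := hne.card_pos; omega
  · obtain ⟨u, rfl⟩ := Finset.card_eq_one.mp h1
    exact ⟨u, u, by simp⟩
  · obtain ⟨u, v, -, rfl⟩ := Finset.card_eq_two.mp h2
    exact ⟨u, v, by simp⟩

theorem stmt_1_general {V : Type*} [Fintype V] [DecidableEq V]
    (G : SimpleGraph V) (m₁ m₂ : V) (hne : m₁ ≠ m₂)
    (hconn : G.Connected) (hcard : 5 ≤ Fintype.card V)
    (h : ∀ u v : V,
      (G.induce (({u, v} : Set V)ᶜ)).Connected ∨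
        ∀ x : (({u, v} : Set V)ᶜ : Set V),
          ∃ m, (m = m₁ ∨ m = m₂) ∧ ∃ hm : m ∈ (({u, v} : Set V)ᶜ),
            (G.induce (({u, v} : Set V)ᶜ)).Reachable x ⟨m, hm⟩) :
    KConn (addEdge G m₁ m₂) 3 := by
  refine ⟨by omega, fun S hS ↦ ?_⟩
  obtain ⟨x, -, hx⟩ := Finset.exists_mem_notMem_of_card_lt_card
    (show S.card < (Finset.univ : Finset V).card by rw [Finset.card_univ]; omega)
  have hT : Nonempty ((S : Set V)ᶜ : Set V) := ⟨⟨x, hx⟩⟩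
  rcases S.eq_empty_or_nonempty with rfl | hS₀
  · rw [Finset.coe_empty, Set.compl_empty]
    exact (SimpleGraph.induceUnivIso _).connected_iff.mpr (hconn.mono (le_addEdge G m₁ m₂))
  · obtain ⟨u, v, huv⟩ := Finset.exists_coe_eq_pair hS₀ (by omega)
    rw [huv] at hT ⊢
    exact induce_addEdge_connected G m₁ m₂ hne _ (h u v)

theorem stmt_1 {V : Type*} [Fintype V] [DecidableEq V]
    (G : SimpleGraph V) (m₁ m₂ : V) (hne : m₁ ≠ m₂) (hnadj : ¬ G.Adj m₁ m₂)
    (hconn : G.Connected) (hcard : 5 ≤ Fintype.card V)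
    (h : ∀ u v : V,
      (G.induce (({u, v} : Set V)ᶜ)).Connected ∨
        ∀ x : (({u, v} : Set V)ᶜ : Set V),
          ∃ m, (m = m₁ ∨ m = m₂) ∧ ∃ hm : m ∈ (({u, v} : Set V)ᶜ),
            (G.induce (({u, v} : Set V)ᶜ)).Reachable x ⟨m, hm⟩) :
    KConn (addEdge G m₁ m₂) 3 :=
  stmt_1_general G m₁ m₂ hne hconn hcard h
end

section
/- Let G be a simple graph with non-adjacent distinguished vertices m₁, m₂ such that G + m₁m₂ is 3-vertex-connected. Then no vertex r of G is a cutvertex of G separating some vertex from both m₁ and m₂; that is, for every vertex r and every vertex u ≠ r, there is a path from u to m₁ or to m₂ in G − r. -/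
/-!
Let `r` be a vertex and `m` one of `m₁, m₂` other than `r`, and let `m'` be the other one.
Deleting `r` and `m'` from `G + m₁m₂` also deletes the added edge, so by 3-connectivity
`G - {r, m'}` is connected; hence every vertex other than `r` and `m'` reaches `m` avoiding `r`,
and `m'` is itself a distinguished vertex.
-/

namespace SimpleGraph

variable {V : Type*}

lemma addEdge_comm (G : SimpleGraph V) (a b : V) : addEdge G a b = addEdge G b a := by
  simp only [addEdge, Sym2.eq_swap]

lemma induce_addEdge_of_right_notMem (G : SimpleGraph V) (a : V) {b : V} {s : Set V}
    (hb : b ∉ s) : (addEdge G a b).induce s = G.induce s := by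
  ext ⟨v, hv⟩ ⟨w, hw⟩
  simp only [addEdge, comap_adj, Function.Embedding.coe_subtype, sup_adj, fromEdgeSet_adj,
    Set.mem_singleton_iff, Sym2.eq_iff, or_iff_left_iff_imp]
  rintro ⟨⟨rfl, rfl⟩ | ⟨rfl, rfl⟩, -⟩ <;> contradiction

lemma exists_reachable_induce_compl_singleton_of_kConn_addEdge [Fintype V] [DecidableEq V]
    {G : SimpleGraph V} {a b r : V} (h3 : KConn (addEdge G a b) 3) (hab : a ≠ b) (hra : r ≠ a)
    (u : V) (hu : u ∈ ({r} : Set V)ᶜ) :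
    ∃ m, (m = a ∨ m = b) ∧ ∃ hm : m ∈ ({r} : Set V)ᶜ,
      (G.induce ({r} : Set V)ᶜ).Reachable ⟨u, hu⟩ ⟨m, hm⟩ := by
  by_cases hub : u = b
  · subst hub
    exact ⟨u, Or.inr rfl, hu, .rfl⟩
  have hconn : (G.induce ({r, b} : Set V)ᶜ).Connected := by
    have h := h3.2 {r, b} (Finset.card_le_two.trans_lt (by norm_num))
    rwa [Finset.coe_pair, induce_addEdge_of_right_notMem G a (by simp)] at h
  have hsub : ({r, b} : Set V)ᶜ ⊆ ({r} : Set V)ᶜ :=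
    Set.compl_subset_compl.mpr (by simp)
  have hu' : u ∈ ({r, b} : Set V)ᶜ := by simp_all
  have ha' : a ∈ ({r, b} : Set V)ᶜ := by simp [hra.symm, hab]
  exact ⟨a, Or.inl rfl, hsub ha',
    (hconn.preconnected ⟨u, hu'⟩ ⟨a, ha'⟩).map (G.induceHomOfLE hsub).toHom⟩

end SimpleGraph

open SimpleGraph in
theorem stmt_7_general {V : Type*} [Fintype V] [DecidableEq V]
    (G : SimpleGraph V) (m₁ m₂ : V) (hne : m₁ ≠ m₂)
    (h3 : KConn (addEdge G m₁ m₂) 3) :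
    ∀ (r u : V) (hu : u ∈ (({r} : Set V)ᶜ)),
      ∃ m, (m = m₁ ∨ m = m₂) ∧ ∃ hm : m ∈ (({r} : Set V)ᶜ),
        (G.induce (({r} : Set V)ᶜ)).Reachable ⟨u, hu⟩ ⟨m, hm⟩ := by
  intro r u hu
  by_cases hr : r = m₁
  · rw [addEdge_comm] at h3
    obtain ⟨m, hm, hreach⟩ := exists_reachable_induce_compl_singleton_of_kConn_addEdge h3
      hne.symm (hr ▸ hne) u hu
    exact ⟨m, hm.symm, hreach⟩
  · exact exists_reachable_induce_compl_singleton_of_kConn_addEdge h3 hne hr u hu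

theorem stmt_7 {V : Type*} [Fintype V] [DecidableEq V]
    (G : SimpleGraph V) (m₁ m₂ : V) (hne : m₁ ≠ m₂) (hnadj : ¬ G.Adj m₁ m₂)
    (h3 : KConn (addEdge G m₁ m₂) 3) :
    ∀ (r u : V) (hu : u ∈ (({r} : Set V)ᶜ)),
      ∃ m, (m = m₁ ∨ m = m₂) ∧ ∃ hm : m ∈ (({r} : Set V)ᶜ),
        (G.induce (({r} : Set V)ᶜ)).Reachable ⟨u, hu⟩ ⟨m, hm⟩ :=
  stmt_7_general G m₁ m₂ hne h3
end

section
/- Let G be a simple graph with non-adjacent distinguished vertices m₁, m₂ such that G + m₁m₂ is 3-vertex-connected, and let vw be an edge of G with v, w ∉ {m₁, m₂}. Then for each i ∈ {1,2} there exists a path from mᵢ to v in G that avoids the vertex w and avoids the other distinguished vertex m_{3−i}. -/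
/-!
Delete `w` and `mⱼ` (`j ≠ i`): fewer than three vertices, so `G + m₁m₂` stays connected. The added
edge has lost its endpoint `mⱼ`, so what remains is an induced subgraph of `G` itself, and it
contains `mᵢ` and `v` (as `v ≠ w`). A path between them there is the required path in `G`.
-/

section

open SimpleGraph

variable {V : Type*}

lemma addEdge_comm (G : SimpleGraph V) (a b : V) : addEdge G a b = addEdge G b a := by
  rw [addEdge, addEdge, Sym2.eq_swap]

lemma induce_addEdge_of_notMem (G : SimpleGraph V) (a : V) {b : V} {s : Set V} (hb : b ∉ s) :
    (addEdge G a b).induce s = G.induce s := by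
  ext x y
  simp only [comap_adj, Function.Embedding.subtype_apply, addEdge, sup_adj, fromEdgeSet_adj,
    Set.mem_singleton_iff, or_iff_left_iff_imp, and_imp]
  intro hxy _
  rcases Sym2.eq_iff.mp hxy with ⟨-, rfl⟩ | ⟨rfl, -⟩
  exacts [absurd y.2 hb, absurd x.2 hb]

lemma exists_isPath_of_preconnected_induce [DecidableEq V] {G : SimpleGraph V} {s : Set V}
    (h : (G.induce s).Preconnected) {x y : V} (hx : x ∈ s) (hy : y ∈ s) :
    ∃ p : G.Walk x y, p.IsPath ∧ ∀ z ∈ p.support, z ∈ s := by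
  obtain ⟨q⟩ := h ⟨x, hx⟩ ⟨y, hy⟩
  let f := Embedding.induce (G := G) s
  have hsupp : ∀ z ∈ (q.toPath.1.map f.toHom).support, z ∈ s := by
    simp only [Walk.support_map, List.mem_map]
    rintro _ ⟨z, -, rfl⟩
    exact z.2
  exact ⟨_, q.toPath.2.map f.injective, hsupp⟩

lemma exists_isPath_avoiding_of_kConn_addEdge [Fintype V] [DecidableEq V] {G : SimpleGraph V}
    {a b : V} (h3 : KConn (addEdge G a b) 3) {x y w : V} (hxw : x ≠ w) (hxb : x ≠ b)
    (hyw : y ≠ w) (hyb : y ≠ b) :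
    ∃ p : G.Walk x y, p.IsPath ∧ w ∉ p.support ∧ b ∉ p.support := by
  have hconn := h3.2 {w, b} (Finset.card_le_two.trans_lt (by norm_num))
  rw [induce_addEdge_of_notMem G a (by simp)] at hconn
  obtain ⟨p, hp, hsupp⟩ := exists_isPath_of_preconnected_induce hconn.preconnected
    (x := x) (y := y) (by simp [hxw, hxb]) (by simp [hyw, hyb])
  exact ⟨p, hp, fun hw => by simpa using hsupp w hw, fun hb => by simpa using hsupp b hb⟩

end

theorem stmt_9_general {V : Type*} [Fintype V] [DecidableEq V]
    (G : SimpleGraph V) (m₁ m₂ : V) (hne : m₁ ≠ m₂)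
    (h3 : KConn (addEdge G m₁ m₂) 3)
    (v w : V) (hvw : G.Adj v w)
    (hv₁ : v ≠ m₁) (hv₂ : v ≠ m₂) (hw₁ : w ≠ m₁) (hw₂ : w ≠ m₂) :
    (∃ p : G.Walk m₁ v, p.IsPath ∧ w ∉ p.support ∧ m₂ ∉ p.support) ∧
    (∃ p : G.Walk m₂ v, p.IsPath ∧ w ∉ p.support ∧ m₁ ∉ p.support) := by
  refine ⟨exists_isPath_avoiding_of_kConn_addEdge h3 hw₁.symm hne hvw.ne hv₂, ?_⟩
  rw [addEdge_comm] at h3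
  exact exists_isPath_avoiding_of_kConn_addEdge h3 hw₂.symm hne.symm hvw.ne hv₁

theorem stmt_9 {V : Type*} [Fintype V] [DecidableEq V]
    (G : SimpleGraph V) (m₁ m₂ : V) (hne : m₁ ≠ m₂) (hnadj : ¬ G.Adj m₁ m₂)
    (h3 : KConn (addEdge G m₁ m₂) 3)
    (v w : V) (hvw : G.Adj v w)
    (hv₁ : v ≠ m₁) (hv₂ : v ≠ m₂) (hw₁ : w ≠ m₁) (hw₂ : w ≠ m₂) :
    (∃ p : G.Walk m₁ v, p.IsPath ∧ w ∉ p.support ∧ m₂ ∉ p.support) ∧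
    (∃ p : G.Walk m₂ v, p.IsPath ∧ w ∉ p.support ∧ m₁ ∉ p.support) :=
  stmt_9_general G m₁ m₂ hne h3 v w hvw hv₁ hv₂ hw₁ hw₂
end

section
/- Let G be a simple 2-edge-connected graph, vw ∈ E(G), and suppose G − vw is 2-edge-connected. Then there exist two cycles C₁ and C₂ in G both containing the edge vw such that vw is the only edge common to C₁ and C₂. -/
/-!
Delete `vw`: it suffices to find two edge-disjoint `w`–`v` paths in `G − vw`, since closing each
with `vw` gives the two cycles. In a bridgeless graph any two connected vertices `u`, `v` are joined
by two edge-disjoint paths, by induction along a walk from `u` to `v`. Given such paths `P₁`, `P₂`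
to `w` and an edge `wv`, follow a walk from `w` to `v` avoiding `wv` from the last vertex `x` it
shares with `P₁ ∪ P₂`, say `x ∈ P₁`: the first new path is `P₁` up to `x` followed by that walk,
the second is `P₂` followed by `wv`. (If `v` lies on both `P₁` and `P₂`, cut both at `v`.)
-/

/-- `G` is 2-edge-connected: connected and still connected after deleting any single edge. -/
def TwoEdgeConn {V : Type*} (G : SimpleGraph V) : Prop :=
  G.Connected ∧ ∀ e ∈ G.edgeSet, (G.deleteEdges {e}).Connected

lemma TwoEdgeConn.not_isBridge {V : Type*} {G : SimpleGraph V} (hG : TwoEdgeConn G) {x y : V}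
    (h : G.Adj x y) : ¬G.IsBridge s(x, y) :=
  SimpleGraph.isBridge_iff.not.mpr (not_not.mpr ((hG.2 _ h).preconnected x y))

namespace SimpleGraph

variable {V : Type*} {G : SimpleGraph V}

def HasTwoEdgeDisjointPaths (G : SimpleGraph V) (u v : V) : Prop :=
  ∃ p q : G.Walk u v, p.IsPath ∧ q.IsPath ∧ p.edges.Disjoint q.edges

lemma HasTwoEdgeDisjointPaths.refl (u : V) : G.HasTwoEdgeDisjointPaths u u :=
  ⟨.nil, .nil, .nil, .nil, by simp⟩

namespace Walk

lemma exists_suffix_from_last_mem (S : Set V) {a b : V} (R : G.Walk a b)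
    (hS : ∃ y ∈ R.support, y ∈ S) :
    ∃ x ∈ S, ∃ T : G.Walk x b, T.edges ⊆ R.edges ∧ ∀ y ∈ T.support, y ∈ S → y = x := by
  induction R with
  | nil =>
    obtain ⟨y, hy, hyS⟩ := hS
    rw [support_nil, List.mem_singleton] at hy
    subst hy
    exact ⟨y, hyS, nil, by simp, by simp⟩
  | @cons a c b h R ih =>
    by_cases hR : ∃ y ∈ R.support, y ∈ S
    · obtain ⟨x, hxS, T, hTR, hTS⟩ := ih hR
      exact ⟨x, hxS, T, List.subset_cons_of_subset _ hTR, hTS⟩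
    · have hS' : ∀ y ∈ (cons h R).support, y ∈ S → y = a := by
        intro y hy hyS
        rw [support_cons, List.mem_cons] at hy
        exact hy.resolve_right fun hy => hR ⟨y, hy, hyS⟩
      obtain ⟨y, hy, hyS⟩ := hS
      exact ⟨a, hS' y hy hyS ▸ hyS, cons h R, List.Subset.refl _, hS'⟩

lemma IsPath.append {u x v : V} {p : G.Walk u x} {q : G.Walk x v} (hp : p.IsPath)
    (hq : q.IsPath) (hpq : ∀ y ∈ p.support, y ∈ q.support → y = x) : (p.append q).IsPath := by
  have hq' := hq.support_nodup
  rw [← cons_tail_support] at hq'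
  rw [isPath_def, support_append]
  refine hp.support_nodup.append hq'.of_cons fun y hy hyq => ?_
  obtain rfl := hpq y hy (List.mem_of_mem_tail hyq)
  exact (List.nodup_cons.mp hq').1 hyq

end Walk

open Walk

section DecidableEq

variable [DecidableEq V]

lemma HasTwoEdgeDisjointPaths.of_reroute {u w v x : V} {P₁ P₂ : G.Walk u w}
    (hp₁ : P₁.IsPath) (hp₂ : P₂.IsPath) (hd : P₁.edges.Disjoint P₂.edges) (hwv : G.Adj w v)
    (hv₂ : v ∉ P₂.support) (hx : x ∈ P₁.support) (T : G.Walk x v) (hTwv : s(w, v) ∉ T.edges)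
    (hTS : ∀ y ∈ T.support, y ∈ P₁.support ∨ y ∈ P₂.support → y = x) :
    G.HasTwoEdgeDisjointPaths u v := by
  have hTS' : ∀ y ∈ T.bypass.support, y ∈ P₁.support ∨ y ∈ P₂.support → y = x :=
    fun y hy => hTS y (T.support_bypass_subset_support hy)
  refine ⟨(P₁.takeUntil x hx).append T.bypass, P₂.concat hwv,
    (hp₁.takeUntil hx).append T.bypass_isPath fun y hy hyT =>
      hTS' y hyT (.inl (P₁.support_takeUntil_subset_support hx hy)),
    hp₂.concat hv₂ hwv, ?_⟩
  intro e he₁ he₂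
  rw [edges_concat, List.concat_eq_append, List.mem_append, List.mem_singleton] at he₂
  rw [edges_append, List.mem_append] at he₁
  rcases he₁ with he₁ | he₁
  · have he₁' := P₁.edges_takeUntil_subset_edges hx he₁
    rcases he₂ with he₂ | rfl
    · exact hd he₁' he₂
    · -- `wv ∈ P₁` forces `v = x`, but `P₁` reaches its end `w` only after `x`
      have hvx : v = x :=
        hTS v T.end_mem_support (.inl (P₁.snd_mem_support_of_mem_edges he₁'))
      subst hvx
      exact endpoint_notMem_support_takeUntil hp₁ hx hwv.ne
        ((P₁.takeUntil v hx).fst_mem_support_of_mem_edges he₁)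
  · have he₁' := T.edges_bypass_subset_edges he₁
    rcases he₂ with he₂ | rfl
    · induction e using Sym2.ind with
      | _ c d =>
        have hc := hTS c (T.fst_mem_support_of_mem_edges he₁')
          (.inr (P₂.fst_mem_support_of_mem_edges he₂))
        have hd := hTS d (T.snd_mem_support_of_mem_edges he₁')
          (.inr (P₂.snd_mem_support_of_mem_edges he₂))
        exact (P₂.adj_of_mem_edges he₂).ne (hc.trans hd.symm)
    · exact hTwv he₁'

lemma HasTwoEdgeDisjointPaths.concat {u w v : V} (h : G.HasTwoEdgeDisjointPaths u w)
    (hwv : G.Adj w v) (R : G.Walk w v) (hR : s(w, v) ∉ R.edges) :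
    G.HasTwoEdgeDisjointPaths u v := by
  obtain ⟨P₁, P₂, hp₁, hp₂, hd⟩ := h
  by_cases hv : v ∈ P₁.support ∧ v ∈ P₂.support
  · exact ⟨P₁.takeUntil v hv.1, P₂.takeUntil v hv.2, hp₁.takeUntil hv.1, hp₂.takeUntil hv.2,
      List.disjoint_of_subset_left (P₁.edges_takeUntil_subset_edges hv.1)
        (List.disjoint_of_subset_right (P₂.edges_takeUntil_subset_edges hv.2) hd)⟩
  obtain ⟨x, hxS, T, hTR, hTS⟩ := R.exists_suffix_from_last_mem
    {y | y ∈ P₁.support ∨ y ∈ P₂.support} ⟨w, R.start_mem_support, .inl P₁.end_mem_support⟩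
  have hTwv : s(w, v) ∉ T.edges := fun h => hR (hTR h)
  have hvx : v ∈ P₁.support ∨ v ∈ P₂.support → v = x := hTS v T.end_mem_support
  rcases hxS with hx | hx
  · have hv₂ : v ∉ P₂.support := fun hv₂ => hv ⟨hvx (.inr hv₂) ▸ hx, hv₂⟩
    exact of_reroute hp₁ hp₂ hd hwv hv₂ hx T hTwv hTS
  · have hv₁ : v ∉ P₁.support := fun hv₁ => hv ⟨hv₁, hvx (.inl hv₁) ▸ hx⟩
    obtain ⟨Q₁, Q₂, hq₁, hq₂, hQ⟩ := of_reroute hp₂ hp₁ hd.symm hwv hv₁ hx T hTwv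
      fun y hy hyS => hTS y hy hyS.symm
    exact ⟨Q₂, Q₁, hq₂, hq₁, hQ.symm⟩

end DecidableEq

theorem Reachable.hasTwoEdgeDisjointPaths (hG : ∀ ⦃x y : V⦄, G.Adj x y → ¬G.IsBridge s(x, y))
    {u v : V} (huv : G.Reachable u v) : G.HasTwoEdgeDisjointPaths u v := by
  classical
  obtain ⟨r⟩ := huv
  induction r using Walk.concatRec with
  | Hnil => exact .refl _
  | Hconcat p hwv ih =>
    obtain ⟨R, hR⟩ := not_forall.mp (isBridge_iff_forall_walk_mem_edges.not.mp (hG hwv))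
    exact ih.concat hwv R hR

end SimpleGraph

open SimpleGraph Walk in
theorem stmt_12_general {V : Type*} (G : SimpleGraph V) (v w : V) (hvw : G.Adj v w)
    (h2 : TwoEdgeConn (G.deleteEdges {s(v, w)})) :
    ∃ (c₁ c₂ : G.Walk v v), c₁.IsCycle ∧ c₂.IsCycle ∧
      s(v, w) ∈ c₁.edges ∧ s(v, w) ∈ c₂.edges ∧
      ∀ e, e ∈ c₁.edges → e ∈ c₂.edges → e = s(v, w) := by
  obtain ⟨p, q, hp, hq, hpq⟩ :=
    (h2.1.preconnected w v).hasTwoEdgeDisjointPaths fun _ _ => h2.not_isBridge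
  have hle : G.deleteEdges {s(v, w)} ≤ G := G.deleteEdges_le _
  have hvw_notMem (r : (G.deleteEdges {s(v, w)}).Walk w v) : s(v, w) ∉ r.edges := fun h => by
    simpa using r.edges_subset_edgeSet h
  refine ⟨cons hvw (p.mapLe hle), cons hvw (q.mapLe hle),
    (cons_isCycle_iff _ _).mpr ⟨hp.mapLe hle, by simpa using hvw_notMem p⟩,
    (cons_isCycle_iff _ _).mpr ⟨hq.mapLe hle, by simpa using hvw_notMem q⟩, by simp, by simp, ?_⟩
  intro e he₁ he₂
  rw [edges_cons, edges_mapLe_eq_edges, List.mem_cons] at he₁ he₂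
  rcases he₁ with rfl | he₁
  · rfl
  rcases he₂ with rfl | he₂
  · exact absurd he₁ (hvw_notMem p)
  · exact absurd he₂ (hpq he₁)

theorem stmt_12 {V : Type*} (G : SimpleGraph V) (v w : V) (hvw : G.Adj v w)
    (h1 : TwoEdgeConn G) (h2 : TwoEdgeConn (G.deleteEdges {s(v, w)})) :
    ∃ (c₁ c₂ : G.Walk v v), c₁.IsCycle ∧ c₂.IsCycle ∧
      s(v, w) ∈ c₁.edges ∧ s(v, w) ∈ c₂.edges ∧
      ∀ e, e ∈ c₁.edges → e ∈ c₂.edges → e = s(v, w) :=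
  stmt_12_general G v w hvw h2
end

section
/- Let G be a simple graph with distinguished vertices m₁, m₂ (non-adjacent) such that G + m₁m₂ is 3-vertex-connected. If C is a cycle in G avoiding m₁ and m₂, vw an edge of C, and x a vertex of C other than v, w, then there exists a path in G from x to m₁ or from x to m₂ that avoids both v and w. -/
/-!
Delete `v` and `w` from `G + m₁m₂`: by 3-connectivity the rest is connected, so some walk
joins `x` to `m₁` while avoiding `v` and `w`. Cut it at its first vertex in `{m₁, m₂}`; the
new edge `m₁m₂` only joins two such vertices, so every edge before the cut lies in `G`.
-/

namespace SimpleGraph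

variable {V : Type*} {G : SimpleGraph V}

lemma adj_of_addEdge_adj {a b x y : V} (h : (addEdge G a b).Adj x y) (hxa : x ≠ a)
    (hxb : x ≠ b) : G.Adj x y := by
  rcases h with h | ⟨h, -⟩
  · exact h
  · rcases Sym2.eq_iff.mp (Set.mem_singleton_iff.mp h) with ⟨rfl, -⟩ | ⟨rfl, -⟩ <;>
      contradiction

lemma Walk.exists_walk_to_addEdge_endpoint {a b x u : V} (p : (addEdge G a b).Walk x u)
    (hu : u = a ∨ u = b) :
    ∃ m, (m = a ∨ m = b) ∧ ∃ q : G.Walk x m, q.support ⊆ p.support := by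
  induction p with
  | nil => exact ⟨_, hu, .nil, by simp⟩
  | @cons x y u hxy p ih =>
    by_cases hx : x = a ∨ x = b
    · exact ⟨x, hx, .nil, by simp⟩
    · push Not at hx
      obtain ⟨m, hm, q, hq⟩ := ih hu
      refine ⟨m, hm, .cons (adj_of_addEdge_adj hxy hx.1 hx.2) q, ?_⟩
      simpa using List.cons_subset_cons x hq

lemma Connected.exists_walk_of_induce {s : Set V} (h : (G.induce s).Connected) {x y : V}
    (hx : x ∈ s) (hy : y ∈ s) : ∃ p : G.Walk x y, ∀ z ∈ p.support, z ∈ s := by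
  obtain ⟨q⟩ := h.preconnected ⟨x, hx⟩ ⟨y, hy⟩
  refine ⟨q.map (Embedding.induce s).toHom, fun z hz => ?_⟩
  obtain ⟨z, -, rfl⟩ := List.mem_map.mp (Walk.support_map _ _ ▸ hz)
  exact z.2

end SimpleGraph

lemma KConn.exists_walk_avoiding {V : Type*} [Fintype V] [DecidableEq V] {G : SimpleGraph V}
    {k : ℕ} (hG : KConn G k) {S : Finset V} (hS : S.card < k) {x y : V} (hx : x ∉ S)
    (hy : y ∉ S) : ∃ p : G.Walk x y, ∀ z ∈ p.support, z ∉ S :=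
  (hG.2 S hS).exists_walk_of_induce hx hy

theorem stmt_16_general {V : Type*} [Fintype V] [DecidableEq V]
    (G : SimpleGraph V) (m₁ m₂ : V)
    (h3 : KConn (addEdge G m₁ m₂) 3)
    (v w : V) (c : G.Walk v v)
    (hm₁ : m₁ ∉ c.support)
    (hvw : s(v, w) ∈ c.edges)
    (x : V) (hxv : x ≠ v) (hxw : x ≠ w) :
    ∃ m, (m = m₁ ∨ m = m₂) ∧
      ∃ p : G.Walk x m, p.IsPath ∧ v ∉ p.support ∧ w ∉ p.support := by
  have hm₁v : m₁ ≠ v := fun h => hm₁ (h ▸ c.start_mem_support)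
  have hm₁w : m₁ ≠ w := fun h => hm₁ (h ▸ c.snd_mem_support_of_mem_edges hvw)
  obtain ⟨p, hp⟩ := h3.exists_walk_avoiding (S := {v, w}) (x := x) (y := m₁)
    (Finset.card_le_two.trans_lt (by norm_num)) (by simp [hxv, hxw]) (by simp [hm₁v, hm₁w])
  obtain ⟨m, hm, q, hq⟩ := p.exists_walk_to_addEdge_endpoint (Or.inl rfl)
  have hqS : ∀ z ∈ q.bypass.support, z ∉ ({v, w} : Finset V) :=
    fun z hz => hp z (hq (q.support_bypass_subset_support hz))
  exact ⟨m, hm, q.bypass, q.bypass_isPath, fun h => hqS v h (by simp),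
    fun h => hqS w h (by simp)⟩

theorem stmt_16 {V : Type*} [Fintype V] [DecidableEq V]
    (G : SimpleGraph V) (m₁ m₂ : V) (hne : m₁ ≠ m₂) (hnadj : ¬ G.Adj m₁ m₂)
    (h3 : KConn (addEdge G m₁ m₂) 3)
    (v w : V) (c : G.Walk v v) (hc : c.IsCycle)
    (hm₁ : m₁ ∉ c.support) (hm₂ : m₂ ∉ c.support)
    (hvw : s(v, w) ∈ c.edges)
    (x : V) (hx : x ∈ c.support) (hxv : x ≠ v) (hxw : x ≠ w) :
    ∃ m, (m = m₁ ∨ m = m₂) ∧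
      ∃ p : G.Walk x m, p.IsPath ∧ v ∉ p.support ∧ w ∉ p.support :=
  stmt_16_general G m₁ m₂ h3 v w c hm₁ hvw x hxv hxw
end
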